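/- arXiv:2301.01604 — 7 statements merged into one kernel-verified Lean document; each statement's English description precedes it below -/
import Mathlib

section
/- Consider k ≥ 1 districts, each a nonempty finite set of agents with real positions, all districts of size λ. Let w be the average position of the agents in some district d_w. Then for every o ∈ ℝ, max over districts d of ∑_{i ∈ d} |x_i - w| ≤ 2 · max over districts d of ∑_{i ∈ d} |x_i - o|. (Distortion of Arbitrary-of-Avg for Max-of-Sum is at most 2.) -/
/-! If `w` is the mean of district `d_w`, then `λ |w - o| = |∑_{i ∈ d_w} (x_i - o)|` is at most the
cost of `o` on `d_w`. By the triangle inequality each district `d` pays for `w` at most its cost for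
`o` plus `λ |o - w|`, hence at most twice the Max-of-Sum cost of `o`. -/

open Finset

lemma Finset.card_mul_abs_sum_div_card_sub_le {ι : Type*} (s : Finset ι) (x : ι → ℝ) (o : ℝ) :
    #s * |(∑ i ∈ s, x i) / #s - o| ≤ ∑ i ∈ s, |x i - o| := by
  have card_mul_sub : (#s : ℝ) * ((∑ i ∈ s, x i) / #s - o) = ∑ i ∈ s, (x i - o) := by
    rw [mul_sub, mul_div_cancel_of_imp' (by simp_all), sum_sub_distrib, sum_const, nsmul_eq_mul]
  calc (#s : ℝ) * |(∑ i ∈ s, x i) / #s - o| = |∑ i ∈ s, (x i - o)| := by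
        rw [← card_mul_sub, abs_mul, Nat.abs_cast]
    _ ≤ ∑ i ∈ s, |x i - o| := abs_sum_le_sum_abs _ _

lemma Finset.sum_abs_sub_le_sum_abs_sub_add {ι : Type*} (s : Finset ι) (x : ι → ℝ) (w o : ℝ) :
    ∑ i ∈ s, |x i - w| ≤ ∑ i ∈ s, |x i - o| + #s * |o - w| :=
  calc ∑ i ∈ s, |x i - w| ≤ ∑ i ∈ s, (|x i - o| + |o - w|) :=
        sum_le_sum fun i _ => abs_sub_le _ _ _
    _ = ∑ i ∈ s, |x i - o| + #s * |o - w| := by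
        rw [sum_add_distrib, sum_const, nsmul_eq_mul]

theorem stmt_5_general {ι : Type*} (k lam : ℕ)
    (hne : (Finset.univ : Finset (Fin k)).Nonempty)
    (D : Fin k → Finset ι)
    (hcard : ∀ j, (D j).card = lam)
    (x : ι → ℝ) (dw : Fin k) (w : ℝ)
    (hw : w = (∑ i ∈ D dw, x i) / lam) (o : ℝ) :
    Finset.univ.sup' hne (fun j => ∑ i ∈ D j, |x i - w|)
      ≤ 2 * Finset.univ.sup' hne (fun j => ∑ i ∈ D j, |x i - o|) := by
  set M := Finset.univ.sup' hne (fun j => ∑ i ∈ D j, |x i - o|)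
  have cost_le (j : Fin k) : ∑ i ∈ D j, |x i - o| ≤ M :=
    le_sup' (fun j => ∑ i ∈ D j, |x i - o|) (mem_univ j)
  have mean_dist_le : lam * |o - w| ≤ M := by
    rw [abs_sub_comm, hw, ← hcard dw]
    exact (card_mul_abs_sum_div_card_sub_le _ x o).trans (cost_le dw)
  refine sup'_le _ _ fun j _ => ?_
  calc ∑ i ∈ D j, |x i - w| ≤ ∑ i ∈ D j, |x i - o| + lam * |o - w| := by
        simpa only [hcard j] using sum_abs_sub_le_sum_abs_sub_add (D j) x w o
    _ ≤ 2 * M := by linarith [cost_le j]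

/-- Distortion of Arbitrary-of-Avg for Max-of-Sum is at most 2. -/
theorem stmt_5 {ι : Type*} [Fintype ι] (k lam : ℕ) (hk : 0 < lam)
    (hne : (Finset.univ : Finset (Fin k)).Nonempty)
    (D : Fin k → Finset ι)
    (hdisj : ∀ j j' : Fin k, j ≠ j' → Disjoint (D j) (D j'))
    (hcard : ∀ j, (D j).card = lam)
    (x : ι → ℝ) (dw : Fin k) (w : ℝ)
    (hw : w = (∑ i ∈ D dw, x i) / lam) (o : ℝ) :
    Finset.univ.sup' hne (fun j => ∑ i ∈ D j, |x i - w|)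
      ≤ 2 * Finset.univ.sup' hne (fun j => ∑ i ∈ D j, |x i - o|) :=
  stmt_5_general k lam hne D hcard x dw w hw o
end

section
/- Consider two districts on the real line: district 1 has all agents at -1, district 2 has all agents at 1. Any distributed mechanism whose district representatives equal the common agent position whenever all agents in a district share a position (cardinal unanimity) must output either -1 or 1, and both locations have max cost 2 while location 0 has max cost 1; hence the distortion of any cardinally-unanimous distributed mechanism for the max cost objective is at least 2. -/
/-- Lower bound of 2 on the distortion of cardinally-unanimous distributed mechanisms
for the max cost: on the two-district instance with all agents of district 1 at -1 and
all agents of district 2 at 1, the output is -1 or 1, which has max cost at least twice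
the max cost of the location 0. -/
theorem stmt_8 (n : ℕ) (hn : 0 < n) (f g : Multiset ℝ → ℝ)
    (hf : ∀ (p : ℝ) (s : Multiset ℝ), s ≠ 0 → (∀ x ∈ s, x = p) → f s = p)
    (hg : ∀ (p : ℝ) (s : Multiset ℝ), s ≠ 0 → (∀ x ∈ s, x = p) → g s = p)
    (w : ℝ)
    (hw : w = f (Multiset.replicate n (-1 : ℝ)) ∨ w = g (Multiset.replicate n (1 : ℝ))) :
    (w = -1 ∨ w = 1)
    ∧ max |(-1 : ℝ) - w| |(1 : ℝ) - w| = 2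
    ∧ max |(-1 : ℝ) - (0 : ℝ)| |(1 : ℝ) - (0 : ℝ)| = 1
    ∧ 2 * max |(-1 : ℝ) - (0 : ℝ)| |(1 : ℝ) - (0 : ℝ)|
        ≤ max |(-1 : ℝ) - w| |(1 : ℝ) - w| := by
  have hne : ∀ (p : ℝ), Multiset.replicate n p ≠ 0 := by
    intro p h
    exact hn.ne' (by simpa using congrArg Multiset.card h)
  have hmem : ∀ (p x : ℝ), x ∈ Multiset.replicate n p → x = p := by
    intro p x hx; exact Multiset.eq_of_mem_replicate hx
  have hw' : w = -1 ∨ w = 1 := by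
    rcases hw with h | h
    · left; rw [h, hf (-1) _ (hne _) (hmem _)]
    · right; rw [h, hg 1 _ (hne _) (hmem _)]
  refine ⟨hw', ?_, ?_, ?_⟩
  · rcases hw' with h | h <;> subst h <;> norm_num
  · norm_num
  · rcases hw' with h | h <;> subst h <;> norm_num
end

section
/- For any p ∈ {1,…,k} and q ∈ {1,…,λ}, the p-Statistic-of-q-Statistic mechanism is strategyproof: for every instance and every agent i, reporting a false position x_i' instead of the true position x_i never yields an output strictly closer to x_i. -/
/-- The `j`-th smallest element (0-indexed) of a multiset of reals. -/
noncomputable def nthSmallest (s : Multiset ℝ) (j : ℕ) : ℝ :=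
  (s.sort (· ≤ ·)).getD j 0

/-- The p-Statistic-of-q-Statistic mechanism: each district's representative is the
q-th smallest position in the district, and the output is the p-th smallest
representative. -/
noncomputable def statMech (k lam p q : ℕ) (x : Fin k → Fin lam → ℝ) : ℝ :=
  nthSmallest
    (Finset.univ.val.map fun d => nthSmallest (Finset.univ.val.map (x d)) (q - 1))
    (p - 1)

/-!
Fix every report except agent `i`'s and regard the output as a function of `i`'s report `v`.
It is the composite of two order-statistic maps `v ↦ nthSmallest (v ::ₘ S) j`: first inside
the district, then among the representatives. Such a map clamps `v` to an interval cut out by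
the neighbouring order statistics of `S` (or is constant when `j` is out of range), so its value
at the truth `t` lies between `t` and its value at any report. This betweenness property is
stable under composition, and it bounds the distance from `t` to the truthful output by the
distance to any manipulated one.
-/

open Function Set

def TruthBetween {α : Type*} [LinearOrder α] (f : α → α) : Prop :=
  ∀ t v, f t ∈ uIcc t (f v)

namespace TruthBetween

variable {α : Type*} [LinearOrder α]

theorem id : TruthBetween fun v : α => v := fun _ _ => left_mem_uIcc

theorem const (c : α) : TruthBetween fun _ : α => c := fun _ _ => right_mem_uIcc

theorem min_const (a : α) : TruthBetween fun v => min v a := by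
  intro t v
  rw [mem_uIcc]
  grind

theorem max_const (a : α) : TruthBetween fun v => max a v := by
  intro t v
  rw [mem_uIcc]
  grind

theorem monotone {f : α → α} (hf : TruthBetween f) : Monotone f := by
  intro a b hab
  have ha := hf a b
  have hb := hf b a
  rw [mem_uIcc] at ha hb
  grind

theorem comp {f g : α → α} (hg : TruthBetween g) (hf : TruthBetween f) :
    TruthBetween fun v => g (f v) := by
  intro t v
  have hft := hf t v
  have hgft := hg (f t) (f v)
  rw [mem_uIcc] at hft hgft ⊢
  rcases hft with ⟨h1, h2⟩ | ⟨h1, h2⟩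
  · have := hg.monotone h2
    grind
  · have := hg.monotone h1
    grind

theorem abs_sub_le {β : Type*} [AddCommGroup β] [LinearOrder β] [IsOrderedAddMonoid β]
    {f : β → β} (hf : TruthBetween f) (t v : β) : |t - f t| ≤ |t - f v| := by
  simpa only [abs_sub_comm t] using abs_sub_left_of_mem_uIcc (hf t v)

end TruthBetween

theorem Multiset.sort_cons_cons {α : Type*} [LinearOrder α] {S : Multiset α} {a : α}
    (ha : ∀ b ∈ S, a ≤ b) (v : α) :
    (v ::ₘ a ::ₘ S).sort (· ≤ ·) =
      if v ≤ a then v :: a :: S.sort (· ≤ ·) else a :: (v ::ₘ S).sort (· ≤ ·) := by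
  split_ifs with hv
  · rw [sort_cons _ _ _ ?_, sort_cons _ _ _ ha]
    simpa using ⟨hv, fun b hb => hv.trans (ha b hb)⟩
  · rw [cons_swap, sort_cons]
    simpa using ⟨(not_le.mp hv).le, ha⟩

theorem nthSmallest_of_card_le {S : Multiset ℝ} {j : ℕ} (h : Multiset.card S ≤ j) :
    nthSmallest S j = 0 :=
  List.getD_eq_default _ _ (by rwa [Multiset.length_sort])

theorem le_nthSmallest {S : Multiset ℝ} {a : ℝ} (ha : ∀ b ∈ S, a ≤ b) {j : ℕ}
    (hj : j < Multiset.card S) : a ≤ nthSmallest S j := by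
  have hj' : j < (S.sort (· ≤ ·)).length := by rwa [Multiset.length_sort]
  rw [nthSmallest, List.getD_eq_getElem _ _ hj']
  exact ha _ ((Multiset.mem_sort _).mp (List.getElem_mem hj'))

theorem nthSmallest_cons_cons_zero {S : Multiset ℝ} {a : ℝ} (ha : ∀ b ∈ S, a ≤ b) (v : ℝ) :
    nthSmallest (v ::ₘ a ::ₘ S) 0 = min v a := by
  rw [nthSmallest, Multiset.sort_cons_cons ha]
  split_ifs with hv
  · simp [hv]
  · simp [(not_le.mp hv).le]

theorem nthSmallest_cons_cons_succ {S : Multiset ℝ} {a : ℝ} (ha : ∀ b ∈ S, a ≤ b) (v : ℝ)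
    {j : ℕ} (hj : j ≤ Multiset.card S) :
    nthSmallest (v ::ₘ a ::ₘ S) (j + 1) = max a (nthSmallest (v ::ₘ S) j) := by
  rw [nthSmallest, Multiset.sort_cons_cons ha]
  split_ifs with hv
  · rw [nthSmallest, Multiset.sort_cons _ _ _ fun b hb => hv.trans (ha b hb)]
    rcases j with _ | j
    · simp [hv]
    · have := le_nthSmallest ha (by omega : j < Multiset.card S)
      simpa [nthSmallest] using (max_eq_right this).symm
  · refine (max_eq_right (le_nthSmallest ?_ (by simpa using Nat.lt_succ_of_le hj))).symm
    simpa using ⟨(not_le.mp hv).le, ha⟩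

theorem truthBetween_nthSmallest_cons_coe {l : List ℝ} (hl : l.Pairwise (· ≤ ·)) (j : ℕ) :
    TruthBetween fun v => nthSmallest (v ::ₘ (l : Multiset ℝ)) j := by
  induction l generalizing j with
  | nil =>
    rcases j with _ | j
    · simpa [nthSmallest] using TruthBetween.id
    · simpa [nthSmallest_of_card_le] using TruthBetween.const 0
  | cons a l ih =>
    obtain ⟨ha, hl⟩ := List.pairwise_cons.mp hl
    replace ha : ∀ b ∈ (l : Multiset ℝ), a ≤ b := by simpa using ha
    rw [← Multiset.cons_coe]
    rcases j with _ | j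
    · simpa only [nthSmallest_cons_cons_zero ha] using TruthBetween.min_const a
    by_cases hj : j ≤ Multiset.card (l : Multiset ℝ)
    · simpa only [nthSmallest_cons_cons_succ ha _ hj] using
        (TruthBetween.max_const a).comp (ih hl j)
    · have h0 (v : ℝ) : nthSmallest (v ::ₘ a ::ₘ l) (j + 1) = 0 :=
        nthSmallest_of_card_le (by simp at hj ⊢; omega)
      simpa only [h0] using TruthBetween.const 0

theorem truthBetween_nthSmallest_cons (S : Multiset ℝ) (j : ℕ) :
    TruthBetween fun v => nthSmallest (v ::ₘ S) j := by
  simpa only [Multiset.sort_eq] using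
    truthBetween_nthSmallest_cons_coe (Multiset.pairwise_sort S (· ≤ ·)) j

theorem Finset.univ_val_map_update {ι β : Type*} [Fintype ι] [DecidableEq ι] (y : ι → β)
    (e : ι) (v : β) :
    univ.val.map (update y e v) = v ::ₘ (univ.erase e).val.map y := by
  rw [← Multiset.cons_erase (mem_univ_val e), Multiset.map_cons, update_self, ← erase_val]
  congr 1
  refine Multiset.map_congr rfl fun e' he' => update_of_ne ?_ _ _
  exact (mem_erase.mp (mem_val.mp he')).1

theorem statMech_update (k lam p q : ℕ) (x : Fin k → Fin lam → ℝ) (d : Fin k) (i : Fin lam)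
    (v : ℝ) :
    statMech k lam p q (update x d (update (x d) i v)) =
      nthSmallest (nthSmallest (v ::ₘ (Finset.univ.erase i).val.map (x d)) (q - 1) ::ₘ
        (Finset.univ.erase d).val.map fun d' => nthSmallest (Finset.univ.val.map (x d')) (q - 1))
        (p - 1) := by
  rw [statMech, ← Finset.univ_val_map_update (x d) i v, ← Finset.univ_val_map_update _ d]
  congr 2
  ext d'
  rcases eq_or_ne d' d with rfl | hd
  · simp
  · simp [hd]

theorem stmt_10_general (k lam p q : ℕ)
    (x : Fin k → Fin lam → ℝ) (d : Fin k) (i : Fin lam) (x' : ℝ) :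
    |x d i - statMech k lam p q x|
      ≤ |x d i - statMech k lam p q
          (fun d' i' => if d' = d ∧ i' = i then x' else x d' i')| := by
  have hx' : (fun d' i' => if d' = d ∧ i' = i then x' else x d' i') =
      update x d (update (x d) i x') := by
    ext d' i'
    simp only [update_apply]
    grind
  have hx := statMech_update k lam p q x d i (x d i)
  rw [update_eq_self, update_eq_self] at hx
  rw [hx', hx, statMech_update]
  exact ((truthBetween_nthSmallest_cons _ _).comp
    (truthBetween_nthSmallest_cons _ _)).abs_sub_le _ _

/-- The p-Statistic-of-q-Statistic mechanism is strategyproof. -/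
theorem stmt_10 (k lam p q : ℕ) (hp : 1 ≤ p) (hpk : p ≤ k) (hq : 1 ≤ q) (hql : q ≤ lam)
    (x : Fin k → Fin lam → ℝ) (d : Fin k) (i : Fin lam) (x' : ℝ) :
    |x d i - statMech k lam p q x|
      ≤ |x d i - statMech k lam p q
          (fun d' i' => if d' = d ∧ i' = i then x' else x d' i')| :=
  stmt_10_general k lam p q x d i x'
end

section
/- Let k districts each have agents with positions in ℝ. For each district d, let r_d be the position of its rightmost agent, and let w be the ⌈(1 - 1/√2)k⌉-th smallest of the values r_d. Then for every o ∈ ℝ with o < w: ∑_d max_{i ∈ d} |x_i - w| ≤ (1 + √2) · ∑_d max_{i ∈ d} |x_i - o|. -/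
/-!
At least `k/√2` districts have their rightmost agent at or beyond `w`, and each of them costs at
least `w - o` at `o`, so `k (w - o) ≤ √2 cost(o)`. Moving the facility from `o` to `w` raises the
maximal distance in every district by at most `w - o`, so
`cost(w) ≤ cost(o) + k (w - o) ≤ (1 + √2) cost(o)`.
-/

open Finset

theorem List.length_sub_le_countP_getD_le {α : Type*} [LinearOrder α] {l : List α}
    (hl : l.Pairwise (· ≤ ·)) (i : ℕ) (d : α) :
    l.length - i ≤ l.countP (fun a => l.getD i d ≤ a) := by
  have hdrop : ∀ a ∈ l.drop i, l.getD i d ≤ a := by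
    intro a ha
    obtain ⟨n, hn, rfl⟩ := List.getElem_of_mem ha
    rw [List.getElem_drop, List.getD_eq_getElem _ _ (by simp at hn; omega)]
    exact hl.rel_get_of_le (a := ⟨i, by simp at hn; omega⟩) (b := ⟨i + n, by simp at hn; omega⟩)
      (by simp)
  calc l.length - i = (l.drop i).countP (fun a => l.getD i d ≤ a) := by
        rw [List.countP_eq_length.mpr (by simpa using hdrop), List.length_drop]
    _ ≤ _ := (List.drop_sublist _ _).countP_le

theorem Finset.card_sub_le_card_filter_getD_sort_le {κ : Type*} [Fintype κ] (r : κ → ℝ)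
    (i : ℕ) (d : ℝ) :
    Fintype.card κ - i ≤ #{j | ((univ.val.map r).sort (· ≤ ·)).getD i d ≤ r j} := by
  have := List.length_sub_le_countP_getD_le (Multiset.pairwise_sort (univ.val.map r) (· ≤ ·)) i d
  rw [Multiset.length_sort, Multiset.card_map, ← Multiset.coe_countP, Multiset.sort_eq,
    Multiset.countP_map] at this
  exact this

theorem one_sub_mul_le_sub_ceil_sub_one {α : ℝ} (hα : 0 ≤ α) (k : ℕ) :
    (1 - α) * k ≤ ((k - (⌈α * k⌉₊ - 1) : ℕ) : ℝ) := by
  have hαk : 0 ≤ α * k := by positivity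
  rcases Nat.eq_zero_or_pos ⌈α * k⌉₊ with hm | hm
  · simp only [hm, zero_tsub, tsub_zero]
    linarith
  · have hlt : ((⌈α * k⌉₊ - 1 : ℕ) : ℝ) < α * k := by
      rw [Nat.cast_sub hm, Nat.cast_one, sub_lt_iff_lt_add]
      exact Nat.ceil_lt_add_one hαk
    have := Nat.cast_le (α := ℝ).mpr (le_tsub_add (b := k) (a := ⌈α * k⌉₊ - 1))
    push_cast at this
    linarith

namespace Finset

variable {ι : Type*} (t : Finset ι) (ht : t.Nonempty) (x : ι → ℝ)

theorem sup'_abs_sub_le_sup'_abs_sub_add (w o : ℝ) :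
    t.sup' ht (fun i => |x i - w|) ≤ t.sup' ht (fun i => |x i - o|) + |w - o| :=
  sup'_le _ _ fun i hi => (abs_sub_le (x i) o w).trans <| by
    rw [abs_sub_comm o w]
    exact add_le_add_left (le_sup' (fun i => |x i - o|) hi) _

theorem sub_le_sup'_abs_sub_of_le_sup' {w o : ℝ} (hw : w ≤ t.sup' ht x) :
    w - o ≤ t.sup' ht (fun i => |x i - o|) := by
  obtain ⟨i, hi, hix⟩ := exists_mem_eq_sup' ht x
  calc w - o ≤ x i - o := by rw [hix] at hw; linarith
    _ ≤ |x i - o| := le_abs_self _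
    _ ≤ _ := le_sup' (fun i => |x i - o|) hi

theorem sup'_abs_sub_nonneg (z : ℝ) : 0 ≤ t.sup' ht fun i => |x i - z| := by
  obtain ⟨i, hi⟩ := ht
  exact (abs_nonneg _).trans (le_sup' (fun i => |x i - z|) hi)

end Finset

section SumOfMax

variable {ι κ : Type*} [Fintype κ] (s : κ → Finset ι) (hs : ∀ j, (s j).Nonempty) (x : ι → ℝ)

noncomputable def sumOfMax (z : ℝ) : ℝ := ∑ j, (s j).sup' (hs j) fun i => |x i - z|

theorem sumOfMax_le_add_card_mul (w o : ℝ) :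
    sumOfMax s hs x w ≤ sumOfMax s hs x o + Fintype.card κ * |w - o| := by
  calc sumOfMax s hs x w ≤ ∑ j, ((s j).sup' (hs j) (fun i => |x i - o|) + |w - o|) :=
        sum_le_sum fun j _ => (s j).sup'_abs_sub_le_sup'_abs_sub_add (hs j) x w o
    _ = _ := by simp [sumOfMax, sum_add_distrib]

theorem card_filter_mul_sub_le_sumOfMax (w o : ℝ) :
    #{j | w ≤ (s j).sup' (hs j) x} * (w - o) ≤ sumOfMax s hs x o := by
  calc (#{j | w ≤ (s j).sup' (hs j) x} : ℝ) * (w - o)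
      ≤ ∑ j ∈ {j | w ≤ (s j).sup' (hs j) x}, (s j).sup' (hs j) (fun i => |x i - o|) := by
        rw [← nsmul_eq_mul]
        exact card_nsmul_le_sum _ _ _ fun j hj =>
          (s j).sub_le_sup'_abs_sub_of_le_sup' (hs j) x (mem_filter.mp hj).2
    _ ≤ sumOfMax s hs x o :=
        sum_le_sum_of_subset_of_nonneg (subset_univ _) fun j _ _ =>
          (s j).sup'_abs_sub_nonneg (hs j) x o

theorem sumOfMax_le_one_add_mul {w o a : ℝ} (how : o ≤ w) (ha : 0 ≤ a)
    (hcard : (Fintype.card κ : ℝ) ≤ a * #{j | w ≤ (s j).sup' (hs j) x}) :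
    sumOfMax s hs x w ≤ (1 + a) * sumOfMax s hs x o := by
  have hcount := card_filter_mul_sub_le_sumOfMax s hs x w o
  calc sumOfMax s hs x w ≤ sumOfMax s hs x o + Fintype.card κ * (w - o) := by
        simpa [abs_of_nonneg (sub_nonneg.mpr how)] using sumOfMax_le_add_card_mul s hs x w o
    _ ≤ sumOfMax s hs x o + a * (#{j | w ≤ (s j).sup' (hs j) x} * (w - o)) := by
        rw [← mul_assoc]; gcongr
    _ ≤ (1 + a) * sumOfMax s hs x o := by nlinarith

end SumOfMax

theorem stmt_11_general {ι : Type*} [Fintype ι] (k : ℕ)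
    (dst : ι → Fin k) (x : ι → ℝ)
    (hne : ∀ j : Fin k, (Finset.univ.filter fun i => dst i = j).Nonempty)
    (r : Fin k → ℝ)
    (hr : ∀ j, r j = (Finset.univ.filter fun i => dst i = j).sup' (hne j) x)
    (w : ℝ)
    (hw : w = ((Finset.univ.val.map r).sort (· ≤ ·)).getD
        (⌈(1 - 1 / Real.sqrt 2) * (k : ℝ)⌉₊ - 1) 0)
    (o : ℝ) (ho : o < w) :
    ∑ j : Fin k, (Finset.univ.filter fun i => dst i = j).sup' (hne j) (fun i => |x i - w|)
      ≤ (1 + Real.sqrt 2) *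
        ∑ j : Fin k, (Finset.univ.filter fun i => dst i = j).sup' (hne j)
          (fun i => |x i - o|) := by
  have hsqrt : 0 < √2 := by positivity
  have hα : 0 ≤ 1 - 1 / √2 := by
    rw [sub_nonneg, div_le_one hsqrt, Real.one_le_sqrt]; norm_num
  have hcount : (1 - (1 - 1 / √2)) * k ≤ #{j | w ≤ r j} := by
    refine (one_sub_mul_le_sub_ceil_sub_one hα k).trans ?_
    have := card_sub_le_card_filter_getD_sort_le r (⌈(1 - 1 / √2) * k⌉₊ - 1) 0
    rw [Fintype.card_fin, ← hw] at this
    exact_mod_cast this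
  rw [sub_sub_cancel, one_div, inv_mul_le_iff₀ hsqrt] at hcount
  refine sumOfMax_le_one_add_mul _ hne x ho.le hsqrt.le ?_
  simpa only [Fintype.card_fin, ← hr] using hcount

/-- Case `o < w` of the Sum-of-Max upper bound for the
⌈(1-1/√2)k⌉-Leftmost-of-Rightmost mechanism. -/
theorem stmt_11 {ι : Type*} [Fintype ι] (k : ℕ) (hk : 0 < k)
    (dst : ι → Fin k) (x : ι → ℝ)
    (hne : ∀ j : Fin k, (Finset.univ.filter fun i => dst i = j).Nonempty)
    (r : Fin k → ℝ)
    (hr : ∀ j, r j = (Finset.univ.filter fun i => dst i = j).sup' (hne j) x)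
    (w : ℝ)
    (hw : w = ((Finset.univ.val.map r).sort (· ≤ ·)).getD
        (⌈(1 - 1 / Real.sqrt 2) * (k : ℝ)⌉₊ - 1) 0)
    (o : ℝ) (ho : o < w) :
    ∑ j : Fin k, (Finset.univ.filter fun i => dst i = j).sup' (hne j) (fun i => |x i - w|)
      ≤ (1 + Real.sqrt 2) *
        ∑ j : Fin k, (Finset.univ.filter fun i => dst i = j).sup' (hne j)
          (fun i => |x i - o|) :=
  stmt_11_general k dst x hne r hr w hw o ho
end

section
/- Let k districts each have agents with positions in ℝ, let r_d be the rightmost agent position of district d, and let w be the ⌈(1 - 1/√2)k⌉-th smallest of the r_d. Then for every o ∈ ℝ with w < o: ∑_d max_{i ∈ d} |x_i - w| ≤ (1 + √2) · ∑_d max_{i ∈ d} |x_i - o|. -/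
open Finset

/-! Let `L` be the districts whose rightmost agent is at most `w`; by the choice of `w` as an
order statistic, `|L| ≥ ⌈(1 - 1/√2)k⌉`. On a district of `L` every agent lies left of `w < o`, so
moving the point from `o` to `w` lowers the maximal distance by exactly `c = o - w`; on any other
district it raises it by at most `c`. Hence the `w`-cost exceeds the `o`-cost by at most
`(k - 2|L|) c ≤ √2 |L| c`, and `|L| c` is at most the `o`-cost of `L`. The constant is the one
for which `(2 + √2)(1 - 1/√2) = 1`. -/

theorem List.Pairwise.succ_le_countP_le_getElem {α : Type*} [LinearOrder α] {l : List α}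
    (hl : l.Pairwise (· ≤ ·)) {i : ℕ} (hi : i < l.length) :
    i + 1 ≤ l.countP (· ≤ l[i]) := by
  have hle : ∀ a ∈ l.take (i + 1), a ≤ l[i] := by
    intro a ha
    obtain ⟨j, hj, rfl⟩ := List.mem_take_iff_getElem.mp ha
    simpa using hl.rel_get_of_le (a := ⟨j, by omega⟩) (b := ⟨i, hi⟩) (by simp; omega)
  refine (le_of_eq ?_).trans (List.take_sublist (i + 1) l).countP_le
  rw [List.countP_eq_length.mpr (by simpa using hle), List.length_take]
  omega

theorem le_card_filter_le_sort_getD {ι α : Type*} [Fintype ι] [LinearOrder α] (r : ι → α)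
    {m : ℕ} (hm0 : 0 < m) (hm : m ≤ Fintype.card ι) (d : α) :
    m ≤ #{j | r j ≤ ((univ.val.map r).sort (· ≤ ·)).getD (m - 1) d} := by
  set l := (univ.val.map r).sort (· ≤ ·)
  have hi : m - 1 < l.length := by simp [l]; omega
  rw [List.getD_eq_getElem l d hi]
  have h := (Multiset.pairwise_sort (univ.val.map r) (· ≤ ·)).succ_le_countP_le_getElem hi
  rw [← Multiset.coe_countP, Multiset.sort_eq, Multiset.countP_map, Nat.sub_add_cancel hm0] at h
  exact h

section Sup

variable {ι α : Type*} [AddCommGroup α] [LinearOrder α] [IsOrderedAddMonoid α]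
  {s : Finset ι} (hs : s.Nonempty) (f : ι → α)

theorem Finset.sup'_abs_sub_le_sup'_abs_sub_add_s12 (w o : α) :
    s.sup' hs (fun i => |f i - w|) ≤ s.sup' hs (fun i => |f i - o|) + |o - w| :=
  sup'_le hs _ fun i hi =>
    (abs_sub_le (f i) o w).trans (by gcongr; exact le_sup' (fun i => |f i - o|) hi)

theorem Finset.sup'_abs_sub_add_sub_le_of_le {w o : α} (hf : ∀ i ∈ s, f i ≤ w) (hwo : w ≤ o) :
    s.sup' hs (fun i => |f i - w|) + (o - w) ≤ s.sup' hs (fun i => |f i - o|) := by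
  rw [← le_sub_iff_add_le]
  refine sup'_le hs _ fun i hi => ?_
  have hfo : |f i - o| ≤ s.sup' hs (fun i => |f i - o|) := le_sup' (fun i => |f i - o|) hi
  rw [abs_of_nonpos (sub_nonpos.mpr ((hf i hi).trans hwo))] at hfo
  calc |f i - w| = -(f i - o) - (o - w) := by
        rw [abs_of_nonpos (sub_nonpos.mpr (hf i hi))]; abel
    _ ≤ _ := sub_le_sub_right hfo _

theorem Finset.sup'_abs_sub_nonneg_s12 (w : α) : 0 ≤ s.sup' hs (fun i => |f i - w|) :=
  le_sup'_of_le _ hs.choose_spec (abs_nonneg _)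

end Sup

theorem Finset.sum_le_one_add_mul_sum_of_shift {ι : Type*} [Fintype ι] (L : Finset ι)
    {f g : ι → ℝ} {a c : ℝ} (hf : ∀ j, 0 ≤ f j) (hg : ∀ j, 0 ≤ g j) (ha : 0 ≤ a)
    (hc : 0 ≤ c) (hL : ∀ j ∈ L, f j + c ≤ g j) (hR : ∀ j ∉ L, f j ≤ g j + c)
    (hcard : (Fintype.card ι : ℝ) ≤ (2 + a) * #L) :
    ∑ j, f j ≤ (1 + a) * ∑ j, g j := by
  classical
  have hsum : ∑ j, f j + #L * c ≤ ∑ j, g j + #Lᶜ * c := by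
    have h₁ : ∑ j ∈ L, (f j + c) ≤ ∑ j ∈ L, g j := sum_le_sum hL
    have h₂ : ∑ j ∈ Lᶜ, f j ≤ ∑ j ∈ Lᶜ, (g j + c) :=
      sum_le_sum fun j hj => hR j (mem_compl.mp hj)
    rw [← sum_add_sum_compl L f, ← sum_add_sum_compl L g]
    simp only [sum_add_distrib, sum_const, nsmul_eq_mul] at h₁ h₂
    linarith
  have hLc : (#Lᶜ : ℝ) = Fintype.card ι - #L := by
    rw [card_compl, Nat.cast_sub (card_le_univ L)]
  have hLg : #L * c ≤ ∑ j, g j :=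
    calc (#L : ℝ) * c = ∑ _j ∈ L, c := by rw [sum_const, nsmul_eq_mul]
      _ ≤ ∑ j ∈ L, g j := sum_le_sum fun j hj => by linarith [hf j, hL j hj]
      _ ≤ ∑ j, g j := sum_le_sum_of_subset_of_nonneg (subset_univ L) fun j _ _ => hg j
  nlinarith [mul_le_mul_of_nonneg_right hcard hc, mul_le_mul_of_nonneg_left hLg ha]

theorem one_sub_one_div_sqrt_two_mem_Ioc : 1 - 1 / √2 ∈ Set.Ioc (0 : ℝ) 1 := by
  have h : 1 / √2 < 1 := by rw [div_lt_one (by positivity)]; exact Real.one_lt_sqrt_two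
  exact ⟨by linarith, by linarith [show 0 ≤ 1 / √2 by positivity]⟩

theorem natCast_le_two_add_sqrt_two_mul_ceil (k : ℕ) :
    (k : ℝ) ≤ (2 + √2) * ⌈(1 - 1 / √2) * k⌉₊ := by
  calc (k : ℝ) = (2 + √2) * ((1 - 1 / √2) * k) := by
        field_simp
        nlinarith [Real.sq_sqrt (zero_le_two : (0 : ℝ) ≤ 2)]
    _ ≤ (2 + √2) * ⌈(1 - 1 / √2) * k⌉₊ := by gcongr; exact Nat.le_ceil _

/-- Case `w < o` of the Sum-of-Max upper bound for the
⌈(1-1/√2)k⌉-Leftmost-of-Rightmost mechanism. -/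
theorem stmt_12 {ι : Type*} [Fintype ι] (k : ℕ) (hk : 0 < k)
    (dst : ι → Fin k) (x : ι → ℝ)
    (hne : ∀ j : Fin k, (Finset.univ.filter fun i => dst i = j).Nonempty)
    (r : Fin k → ℝ)
    (hr : ∀ j, r j = (Finset.univ.filter fun i => dst i = j).sup' (hne j) x)
    (w : ℝ)
    (hw : w = ((Finset.univ.val.map r).sort (· ≤ ·)).getD
        (⌈(1 - 1 / Real.sqrt 2) * (k : ℝ)⌉₊ - 1) 0)
    (o : ℝ) (ho : w < o) :
    ∑ j : Fin k, (Finset.univ.filter fun i => dst i = j).sup' (hne j) (fun i => |x i - w|)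
      ≤ (1 + Real.sqrt 2) *
        ∑ j : Fin k, (Finset.univ.filter fun i => dst i = j).sup' (hne j)
          (fun i => |x i - o|) := by
  obtain ⟨hpos, hle⟩ := one_sub_one_div_sqrt_two_mem_Ioc
  set m := ⌈(1 - 1 / √2) * (k : ℝ)⌉₊
  have hm0 : 0 < m := Nat.ceil_pos.mpr (mul_pos hpos (Nat.cast_pos.mpr hk))
  have hmk : m ≤ Fintype.card (Fin k) := by
    rw [Fintype.card_fin, Nat.ceil_le]
    exact mul_le_of_le_one_left (Nat.cast_nonneg k) hle
  have hL := le_card_filter_le_sort_getD r hm0 hmk 0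
  rw [← hw] at hL
  have hx : ∀ j, ∀ i ∈ univ.filter fun i => dst i = j, x i ≤ r j := fun j i hi =>
    hr j ▸ le_sup' x hi
  refine sum_le_one_add_mul_sum_of_shift {j | r j ≤ w}
    (fun j => sup'_abs_sub_nonneg_s12 _ _ _) (fun j => sup'_abs_sub_nonneg_s12 _ _ _)
    (Real.sqrt_nonneg 2) (sub_nonneg.mpr ho.le)
    (fun j hj => sup'_abs_sub_add_sub_le_of_le _ _
      (fun i hi => (hx j i hi).trans (mem_filter.mp hj).2) ho.le)
    (fun j _ => abs_of_nonneg (sub_nonneg.mpr ho.le) ▸ sup'_abs_sub_le_sup'_abs_sub_add_s12 _ _ _ _)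
    ?_
  calc (Fintype.card (Fin k) : ℝ) = k := by rw [Fintype.card_fin]
    _ ≤ (2 + √2) * m := natCast_le_two_add_sqrt_two_mul_ceil k
    _ ≤ (2 + √2) * #{j | r j ≤ w} := by gcongr
end

section
/- Consider k districts each of size λ, and let each district's representative be the midpoint (max + min)/2 of its agents' positions. Let w be the median representative and o a minimizer of the Sum-of-Max cost, with w < o. Suppose (i) every representative lies in [w, o], and (ii) in every district represented by w, all agents are at w. Then ∑_d max_{i ∈ d} |x_i - w| ≤ ∑_d max_{i ∈ d} |x_i - o|. -/
/-- Core of the proof that Median-of-Midpoints has distortion 1 for Sum-of-Max. -/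
theorem stmt_13 {ι : Type*} [Fintype ι] (k lam : ℕ) (hk : 0 < k) (hlam : 0 < lam)
    (D : Fin k → Finset ι) (hne : ∀ j, (D j).Nonempty)
    (hcard : ∀ j, (D j).card = lam) (x : ι → ℝ)
    (mid : Fin k → ℝ)
    (hmid : ∀ j, mid j = ((D j).inf' (hne j) x + (D j).sup' (hne j) x) / 2)
    (w o : ℝ)
    -- w is the (leftmost) median representative
    (hw : w = ((Finset.univ.val.map mid).sort (· ≤ ·)).getD ((k - 1) / 2) 0)
    -- o minimizes the Sum-of-Max cost
    (hopt : ∀ z : ℝ, ∑ j, (D j).sup' (hne j) (fun i => |x i - o|)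
        ≤ ∑ j, (D j).sup' (hne j) (fun i => |x i - z|))
    (hwo : w < o)
    -- (i) every representative lies in [w, o]
    (hreps : ∀ j, w ≤ mid j ∧ mid j ≤ o)
    -- (ii) in every district represented by w, all agents are at w
    (hwall : ∀ j, mid j = w → ∀ i ∈ D j, x i = w) :
    ∑ j, (D j).sup' (hne j) (fun i => |x i - w|)
      ≤ ∑ j, (D j).sup' (hne j) (fun i => |x i - o|) := by
  classical
  set m := (k - 1) / 2 with hm
  set S : Finset (Fin k) := Finset.univ.filter (fun j => mid j = w) with hS
  set L := ((Finset.univ.val.map mid).sort (· ≤ ·)) with hL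
  have hLlen : L.length = k := by
    rw [hL, Multiset.length_sort, Multiset.card_map]
    simp
  have hmk : m < k := by omega
  have hsort : L.Pairwise (· ≤ ·) := Multiset.pairwise_sort _ _
  have hmemL : ∀ b ∈ L, w ≤ b := by
    intro b hb
    rw [hL, Multiset.mem_sort] at hb
    obtain ⟨j, _, rfl⟩ := Multiset.mem_map.1 hb
    exact (hreps j).1
  have hwget : w = L[m]'(by omega) := by
    rw [hw]; exact List.getD_eq_getElem L 0 (by omega)
  have hcount : m + 1 ≤ L.count w := by
    have hsub : List.Sublist (L.take (m+1)) L := List.take_sublist _ _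
    have hlen : (L.take (m+1)).length = m + 1 := by
      rw [List.length_take]; omega
    have hall : ∀ b ∈ L.take (m+1), w = b := by
      intro b hb
      obtain ⟨i, hi, rfl⟩ := List.mem_iff_getElem.1 hb
      rw [List.getElem_take]
      have hi' : i < m + 1 := by rw [hlen] at hi; omega
      have h1 : L[i]'(by omega) ≤ L[m]'(by omega) := by
        apply hsort.rel_get_of_le
        simpa using Nat.lt_succ_iff.1 hi'
      have h2 : w ≤ L[i]'(by omega) := hmemL _ (List.getElem_mem _)
      rw [← hwget] at h1
      exact le_antisymm h2 h1
    calc m + 1 = (L.take (m+1)).length := hlen.symm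
      _ = (L.take (m+1)).count w := (List.count_eq_length.2 hall).symm
      _ ≤ L.count w := hsub.count_le w
  have hScard : m + 1 ≤ S.card := by
    have h1 : L.count w = Multiset.count w (Finset.univ.val.map mid) := by
      rw [← Multiset.coe_count, hL, Multiset.sort_eq]
    have h2 : Multiset.count w (Finset.univ.val.map mid)
        = Multiset.card (Finset.univ.val.filter (fun j => mid j = w)) := by
      rw [Multiset.count_map]
      congr 1
      exact Multiset.filter_congr (fun a _ => by constructor <;> exact Eq.symm)
    have h3 : S.card = Multiset.card (Finset.univ.val.filter (fun j => mid j = w)) := rfl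
    omega
  have how : (0:ℝ) ≤ o - w := by linarith
  have hSw : ∀ j ∈ S, (D j).sup' (hne j) (fun i => |x i - w|) = 0 := by
    intro j hj
    have hj' : mid j = w := (Finset.mem_filter.1 hj).2
    have hall := hwall j hj'
    apply le_antisymm
    · exact Finset.sup'_le _ _ (fun i hi => by rw [hall i hi]; simp : ∀ i ∈ D j, |x i - w| ≤ (0:ℝ))
    · obtain ⟨i, hi⟩ := hne j
      have : (0:ℝ) = |x i - w| := by rw [hall i hi]; simp
      rw [this]
      exact Finset.le_sup' (fun i => |x i - w|) hi
  have hSo : ∀ j ∈ S, (D j).sup' (hne j) (fun i => |x i - o|) = o - w := by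
    intro j hj
    have hj' : mid j = w := (Finset.mem_filter.1 hj).2
    have hall := hwall j hj'
    apply le_antisymm
    · refine Finset.sup'_le _ _ (fun i hi => ?_)
      rw [hall i hi, abs_of_nonpos (by linarith)]; linarith
    · obtain ⟨i, hi⟩ := hne j
      have : o - w = |x i - o| := by
        rw [hall i hi, abs_of_nonpos (by linarith)]; ring
      rw [this]
      exact Finset.le_sup' (fun i => |x i - o|) hi
  have htri : ∀ j, (D j).sup' (hne j) (fun i => |x i - w|)
      ≤ (D j).sup' (hne j) (fun i => |x i - o|) + (o - w) := by
    intro j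
    refine Finset.sup'_le _ _ (fun i hi => ?_)
    have heq : x i - w = (x i - o) + (o - w) := by ring
    have h1 : |x i - w| ≤ |x i - o| + |o - w| := by
      rw [heq]; exact abs_add_le _ _
    have h2 : |x i - o| ≤ (D j).sup' (hne j) (fun i => |x i - o|) :=
      Finset.le_sup' (fun i => |x i - o|) hi
    rw [abs_of_nonneg how] at h1
    linarith
  -- split sums
  rw [← Finset.sum_add_sum_compl S (fun j => (D j).sup' (hne j) (fun i => |x i - w|)),
      ← Finset.sum_add_sum_compl S (fun j => (D j).sup' (hne j) (fun i => |x i - o|))]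
  rw [Finset.sum_congr rfl hSw, Finset.sum_congr rfl hSo]
  simp only [Finset.sum_const_zero, Finset.sum_const, nsmul_eq_mul, zero_add]
  have hbound : ∑ j ∈ Sᶜ, (D j).sup' (hne j) (fun i => |x i - w|)
      ≤ ∑ j ∈ Sᶜ, (D j).sup' (hne j) (fun i => |x i - o|) + (Sᶜ.card : ℝ) * (o - w) := by
    calc ∑ j ∈ Sᶜ, (D j).sup' (hne j) (fun i => |x i - w|)
        ≤ ∑ j ∈ Sᶜ, ((D j).sup' (hne j) (fun i => |x i - o|) + (o - w)) :=
          Finset.sum_le_sum (fun j _ => htri j)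
      _ = ∑ j ∈ Sᶜ, (D j).sup' (hne j) (fun i => |x i - o|) + (Sᶜ.card : ℝ) * (o - w) := by
          rw [Finset.sum_add_distrib, Finset.sum_const, nsmul_eq_mul]
  have hcc : Sᶜ.card ≤ S.card := by
    have h1 : Sᶜ.card = k - S.card := by
      rw [Finset.card_compl]; simp
    have h2 : S.card ≤ k := by
      have := Finset.card_le_univ S; simpa using this
    omega
  have hcc' : (Sᶜ.card : ℝ) * (o - w) ≤ (S.card : ℝ) * (o - w) := by
    apply mul_le_mul_of_nonneg_right _ how
    exact_mod_cast hcc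
  linarith
end

section
/- Consider the instance with two districts: in district 1 there are ⌈(1+√2)x⌉ agents at 0 and x agents at 1 with representative 0; in district 2 there are x agents at 1 and ⌈(1+√2)x⌉ agents at 2 with representative 2. For the Max-of-Sum objective, cost(0) = cost(2) = 2⌈(1+√2)x⌉ + x and cost(1) = ⌈(1+√2)x⌉, so any mechanism outputting 0 or 2 on this instance has ratio cost(output)/cost(1) ≥ 2 + x/⌈(1+√2)x⌉, which tends to 1 + √2 as x → ∞. -/
open Filter

lemma sqrt2_pos : (0:ℝ) < Real.sqrt 2 := Real.sqrt_pos.mpr (by norm_num)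

lemma inv_c : 1 / (1 + Real.sqrt 2) = Real.sqrt 2 - 1 := by
  have h2 : Real.sqrt 2 ^ 2 = 2 := Real.sq_sqrt (by norm_num)
  have hc : (1 + Real.sqrt 2) ≠ 0 := by positivity
  field_simp
  nlinarith [h2]

lemma lim_aux : Tendsto (fun n : ℕ => (n : ℝ) / ⌈(1 + Real.sqrt 2) * (n : ℝ)⌉₊)
    atTop (nhds (1 / (1 + Real.sqrt 2))) := by
  set c : ℝ := 1 + Real.sqrt 2 with hc
  have hcpos : 0 < c := by have := sqrt2_pos; simp [hc]; linarith
  have hlow : Tendsto (fun n : ℕ => (n : ℝ) / (c * n + 1)) atTop (nhds (1 / c)) := by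
    have h1 : Tendsto (fun n : ℕ => (1:ℝ) / (c + 1 / n)) atTop (nhds (1 / (c + 0))) :=
      Tendsto.div tendsto_const_nhds
        (tendsto_const_nhds.add tendsto_one_div_atTop_nhds_zero_nat) (by positivity)
    rw [add_zero] at h1
    apply h1.congr'
    filter_upwards [eventually_ge_atTop 1] with n hn
    have hn0 : (0:ℝ) < n := by exact_mod_cast hn
    field_simp
  have hup : Tendsto (fun n : ℕ => (1:ℝ) / c) atTop (nhds (1 / c)) := tendsto_const_nhds
  apply tendsto_of_tendsto_of_tendsto_of_le_of_le' hlow hup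
  · filter_upwards [eventually_ge_atTop 1] with n hn
    have hn0 : (0:ℝ) < n := by exact_mod_cast hn
    have hcn : (0:ℝ) < c * n := by positivity
    have hceil : (0:ℝ) < (⌈c * (n:ℝ)⌉₊ : ℝ) := by
      exact_mod_cast Nat.ceil_pos.mpr hcn
    have h1 : ((⌈c * (n:ℝ)⌉₊ : ℝ)) ≤ c * n + 1 := le_of_lt (Nat.ceil_lt_add_one hcn.le)
    exact div_le_div_of_nonneg_left hn0.le hceil h1
  · filter_upwards [eventually_ge_atTop 1] with n hn
    have hn0 : (0:ℝ) < n := by exact_mod_cast hn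
    have hcn : (0:ℝ) < c * n := by positivity
    have hceil : (0:ℝ) < (⌈c * (n:ℝ)⌉₊ : ℝ) := by
      exact_mod_cast Nat.ceil_pos.mpr hcn
    have h1 : c * n ≤ (⌈c * (n:ℝ)⌉₊ : ℝ) := Nat.le_ceil _
    calc (n:ℝ) / ⌈c * (n:ℝ)⌉₊ ≤ n / (c * n) := div_le_div_of_nonneg_left hn0.le hcn h1
      _ = 1 / c := by field_simp

open Filter in
theorem stmt_16 (x : ℕ) (hx : 0 < x) :
    let m : ℕ := ⌈(1 + Real.sqrt 2) * (x : ℝ)⌉₊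
    let d1 : Multiset ℝ := Multiset.replicate m 0 + Multiset.replicate x 1
    let d2 : Multiset ℝ := Multiset.replicate x 1 + Multiset.replicate m 2
    let cost : ℝ → ℝ := fun z =>
      max ((d1.map fun a => |a - z|).sum) ((d2.map fun a => |a - z|).sum)
    cost 0 = 2 * m + x ∧ cost 2 = 2 * m + x ∧ cost 1 = m
      ∧ (∀ w : ℝ, w = 0 ∨ w = 2 → 2 + (x : ℝ) / m ≤ cost w / cost 1)
      ∧ Tendsto (fun n : ℕ => 2 + (n : ℝ) / ⌈(1 + Real.sqrt 2) * (n : ℝ)⌉₊)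
          atTop (nhds (1 + Real.sqrt 2)) := by
  intro m d1 d2 cost
  have hs2 := sqrt2_pos
  have hx0 : (0:ℝ) < x := by exact_mod_cast hx
  have hmpos : 0 < m := Nat.ceil_pos.mpr (by positivity)
  have hm0 : (0:ℝ) < (m:ℝ) := by exact_mod_cast hmpos
  have hc0 : cost 0 = 2 * m + x := by
    show max _ _ = _
    simp only [d1, d2, Multiset.map_add, Multiset.map_replicate, Multiset.sum_add,
      Multiset.sum_replicate, smul_eq_mul]
    norm_num
    ring
  have hc2 : cost 2 = 2 * m + x := by
    show max _ _ = _
    simp only [d1, d2, Multiset.map_add, Multiset.map_replicate, Multiset.sum_add,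
      Multiset.sum_replicate, smul_eq_mul]
    norm_num [abs_of_nonpos]
    ring
  have hc1 : cost 1 = m := by
    show max _ _ = _
    simp only [d1, d2, Multiset.map_add, Multiset.map_replicate, Multiset.sum_add,
      Multiset.sum_replicate, smul_eq_mul]
    norm_num [abs_of_nonpos]
  refine ⟨hc0, hc2, hc1, ?_, ?_⟩
  · intro w hw
    have hcw : cost w = 2 * m + x := by rcases hw with h | h <;> rw [h] <;> assumption
    rw [hcw, hc1]
    have heq : (2 * (m:ℝ) + x) / m = 2 + x / m := by field_simp
    rw [heq]
  · have h := lim_aux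
    have h2 : Tendsto (fun n : ℕ => 2 + (n : ℝ) / ⌈(1 + Real.sqrt 2) * (n : ℝ)⌉₊)
        atTop (nhds (2 + 1 / (1 + Real.sqrt 2))) := tendsto_const_nhds.add h
    have : 2 + 1 / (1 + Real.sqrt 2) = 1 + Real.sqrt 2 := by rw [inv_c]; ring
    rwa [this] at h2
end
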